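/- For p ∈ (1,∞) and q ∈ [0,1], the function x ↦ |cn_p(x,q)|^{p-2} cn_p(x,q) is of class C² on ℝ, with first derivative equal to -(2 - 2/p) sin(am_{1,p}(x,q)) √(1 - q² sin²(am_{1,p}(x,q))). -/

import Mathlib

open Real MeasureTheory Set intervalIntegral Filter

noncomputable section

/-- Incomplete p-elliptic integral of the first kind, type 1. -/
def F1 (p q x : ℝ) : ℝ :=
  ∫ θ in (0:ℝ)..x, |Real.cos θ| ^ (1 - 2/p) / Real.sqrt (1 - q^2 * Real.sin θ ^ 2)

/-- Complete p-elliptic integral of the first kind, type 1. -/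
def K1 (p q : ℝ) : ℝ := F1 p q (π/2)

/-- Incomplete p-elliptic integral of the second kind, type 1. -/
def E1 (p q x : ℝ) : ℝ :=
  ∫ θ in (0:ℝ)..x, Real.sqrt (1 - q^2 * Real.sin θ ^ 2) * |Real.cos θ| ^ (1 - 2/p)

/-- Complete p-elliptic integral of the second kind, type 1. -/
def E1c (p q : ℝ) : ℝ := E1 p q (π/2)

/-- Incomplete p-elliptic integral of the first kind, type 2. -/
def F2 (p q x : ℝ) : ℝ :=
  ∫ θ in (0:ℝ)..x, (1 - q^2 * Real.sin θ ^ 2) ^ (-(1/p))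

/-- Complete p-elliptic integral of the first kind, type 2. -/
def K2 (p q : ℝ) : ℝ := F2 p q (π/2)

open Classical in
/-- Domain of the amplitude parametrization: restricted to `(-π/2, π/2)` when `q = 1` and `p ≤ 2`. -/
def amDom (p q : ℝ) : Set ℝ := if q = 1 ∧ p ≤ 2 then Ioo (-(π/2)) (π/2) else univ

/-- `g` is the inverse of `f`, with `f` regarded as a bijection from `S` onto `ℝ`. -/
def IsInverseOn (f g : ℝ → ℝ) (S : Set ℝ) : Prop :=
  (∀ y ∈ S, g (f y) = y) ∧ ∀ x : ℝ, g x ∈ S ∧ f (g x) = x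

/-! With θ = am x the function is Φ(θ) = |cos θ|^{1-2/p} cos θ. Off the zeros of `cos`,
Φ' = ψ·w and ψ' = ρ·w, where w is the integrand of `F1`, ψ(θ) = -(2-2/p) sin θ √(1 - q² sin² θ)
and ρ is continuous; since F1' = w, formally (Φ ∘ am)' = ψ ∘ am and (ψ ∘ am)' = ρ ∘ am.
At the zeros of `cos` the weight w can vanish or blow up, so am need not be differentiable there;
instead, Φ(am t) - Φ(am x) = ∫ ψ·w and t - x = ∫ w over [am x, am t] (fundamental theorem of
calculus off the countably many zeros of `cos`), and continuity of ψ makes the quotient tend to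
ψ(am x). The same argument applies to ψ. -/

open Topology Interval

theorem continuous_abs_rpow_mul_self {c : ℝ} (hc : -1 < c) :
    Continuous fun t : ℝ => |t| ^ c * t := by
  refine continuous_iff_continuousAt.2 fun u => ?_
  rcases eq_or_ne u 0 with rfl | hu
  · have hbound : ∀ t : ℝ, ‖|t| ^ c * t‖ ≤ |t| ^ (c + 1) := fun t => by
      rcases eq_or_ne t 0 with rfl | ht
      · simp [Real.zero_rpow (by linarith : c + 1 ≠ 0)]
      · rw [norm_mul, Real.norm_eq_abs, Real.norm_eq_abs, Real.abs_rpow_of_nonneg (abs_nonneg t),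
          abs_abs, Real.rpow_add_one (abs_ne_zero.2 ht)]
    have hlim : Tendsto (fun t : ℝ => |t| ^ (c + 1)) (𝓝 0) (𝓝 0) := by
      simpa [Real.zero_rpow (by linarith : c + 1 ≠ 0)] using
        (continuous_abs.tendsto 0).rpow_const (Or.inr (by linarith : (0:ℝ) ≤ c + 1))
    simpa [ContinuousAt] using squeeze_zero_norm hbound hlim
  · exact (continuous_abs.continuousAt.rpow_const (Or.inl (abs_ne_zero.2 hu))).mul
      continuousAt_id

theorem hasDerivAt_abs_rpow_mul_self {c u : ℝ} (hu : u ≠ 0) :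
    HasDerivAt (fun t : ℝ => |t| ^ c * t) ((c + 1) * |u| ^ c) u := by
  refine (((hasDerivAt_abs hu).rpow_const (p := c) (Or.inl (abs_ne_zero.2 hu))).mul
    (hasDerivAt_id' u)).congr_deriv ?_
  have hsign : |u| ^ (c - 1) * (SignType.sign u * u) = |u| ^ c := by
    rw [sign_mul_self, ← Real.rpow_add_one (abs_ne_zero.2 hu)]; ring_nf
  linear_combination c * hsign

theorem abs_rpow_mul_self_rpow_mul_self (a b t : ℝ) :
    |(|t| ^ a * t)| ^ b * (|t| ^ a * t) = |t| ^ (a + b * (a + 1)) * t := by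
  rcases eq_or_ne t 0 with rfl | ht
  · simp
  have hpos : 0 < |t| := abs_pos.2 ht
  rw [abs_mul, Real.abs_rpow_of_nonneg (abs_nonneg t), abs_abs, ← Real.rpow_add_one hpos.ne',
    ← Real.rpow_mul hpos.le, ← mul_assoc, ← Real.rpow_add hpos]
  ring_nf

theorem IsInverseOn.continuous {F am : ℝ → ℝ} {S : Set ℝ} [S.OrdConnected]
    (ham : IsInverseOn F am S) (hmono : Monotone am) : Continuous am := by
  have hsurj : Function.Surjective (S.codRestrict am fun x => (ham.2 x).1) :=
    fun θ => ⟨F θ, Subtype.ext (ham.1 θ θ.2)⟩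
  exact continuous_subtype_val.comp ((hmono.codRestrict _).continuous_of_surjective hsurj)

section InverseOfIntegral

variable {S : Set ℝ} {w am : ℝ → ℝ}

theorem IsInverseOn.intervalIntegrable (ham : IsInverseOn (fun x => ∫ θ in (0:ℝ)..x, w θ) am S)
    (h0 : 0 ∈ S) {u v : ℝ} (hu : u ∈ S) (hv : v ∈ S) : IntervalIntegrable w volume u v := by
  have from_zero : ∀ x ∈ S, IntervalIntegrable w volume 0 x := by
    intro x hx
    by_contra h
    -- off integrability the integral is the junk value `0`, so `x` and `0` would share an image
    have hx0 : x = 0 := by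
      have hx := ham.1 x hx
      have h0 := ham.1 0 h0
      simp only [intervalIntegral.integral_undef h, integral_same] at hx h0
      exact hx.symm.trans h0
    exact h (hx0 ▸ IntervalIntegrable.refl)
  exact (from_zero u hu).symm.trans (from_zero v hv)

theorem IsInverseOn.sub_eq_integral (ham : IsInverseOn (fun x => ∫ θ in (0:ℝ)..x, w θ) am S)
    (h0 : 0 ∈ S) (s t : ℝ) : t - s = ∫ θ in am s..am t, w θ := by
  conv_lhs => rw [← (ham.2 t).2, ← (ham.2 s).2]
  exact integral_interval_sub_left (ham.intervalIntegrable h0 h0 (ham.2 t).1)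
    (ham.intervalIntegrable h0 h0 (ham.2 s).1)

theorem IsInverseOn.monotone (ham : IsInverseOn (fun x => ∫ θ in (0:ℝ)..x, w θ) am S)
    (h0 : 0 ∈ S) (hw : ∀ θ, 0 ≤ w θ) : Monotone am := by
  intro s t hst
  by_contra! h
  have hts : t - s ≤ 0 := by
    rw [ham.sub_eq_integral h0, integral_symm, neg_nonpos]
    exact integral_nonneg h.le fun θ _ => hw θ
  obtain rfl : s = t := le_antisymm hst (by linarith)
  exact lt_irrefl _ h

theorem IsInverseOn.sub_eq_integral_mul (ham : IsInverseOn (fun x => ∫ θ in (0:ℝ)..x, w θ) am S)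
    (h0 : 0 ∈ S) {Φ ρ : ℝ → ℝ} {C : Set ℝ} (hC : C.Countable) (hΦ : Continuous Φ)
    (hρ : Continuous ρ) (hΦ' : ∀ θ ∉ C, HasDerivAt Φ (ρ θ * w θ) θ) (s t : ℝ) :
    Φ (am t) - Φ (am s) = ∫ θ in am s..am t, ρ θ * w θ :=
  (integral_eq_of_hasDerivAt_off_countable Φ _ hC hΦ.continuousOn (fun θ hθ => hΦ' θ hθ.2)
    ((ham.intervalIntegrable h0 (ham.2 s).1 (ham.2 t).1).continuousOn_mul hρ.continuousOn)).symm

theorem IsInverseOn.hasDerivAt_comp [S.OrdConnected]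
    (ham : IsInverseOn (fun x => ∫ θ in (0:ℝ)..x, w θ) am S) (h0 : 0 ∈ S) (hw : ∀ θ, 0 ≤ w θ)
    {Φ ρ : ℝ → ℝ} {C : Set ℝ} (hC : C.Countable) (hΦ : Continuous Φ) (hρ : Continuous ρ)
    (hΦ' : ∀ θ ∉ C, HasDerivAt Φ (ρ θ * w θ) θ) (x : ℝ) :
    HasDerivAt (fun t => Φ (am t)) (ρ (am x)) x := by
  rw [hasDerivAt_iff_isLittleO, Asymptotics.isLittleO_iff]
  intro ε hε
  obtain ⟨a, b, hab, hρ_near⟩ := mem_nhds_iff_exists_Ioo_subset.1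
    (hρ.continuousAt.preimage_mem_nhds (Metric.closedBall_mem_nhds (ρ (am x)) hε))
  have ham_cont := ham.continuous (ham.monotone h0 hw)
  filter_upwards [ham_cont.continuousAt.preimage_mem_nhds (isOpen_Ioo.mem_nhds hab)] with t ht
  have hw_int : IntervalIntegrable w volume (am x) (am t) :=
    ham.intervalIntegrable h0 (ham.2 x).1 (ham.2 t).1
  have hbound : ∀ θ ∈ Ι (am x) (am t), ‖(ρ θ - ρ (am x)) * w θ‖ ≤ ε * w θ := by
    intro θ hθ
    have hθρ := hρ_near (ordConnected_Ioo.uIcc_subset hab ht (uIoc_subset_uIcc hθ))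
    rw [norm_mul, Real.norm_of_nonneg (hw θ)]
    exact mul_le_mul_of_nonneg_right (mem_closedBall_iff_norm.1 hθρ) (hw θ)
  calc ‖Φ (am t) - Φ (am x) - (t - x) • ρ (am x)‖
      = ‖∫ θ in am x..am t, (ρ θ - ρ (am x)) * w θ‖ := by
        rw [ham.sub_eq_integral_mul h0 hC hΦ hρ hΦ', ham.sub_eq_integral h0 x t, smul_eq_mul,
          mul_comm, ← intervalIntegral.integral_const_mul,
          ← integral_sub (hw_int.continuousOn_mul hρ.continuousOn) (hw_int.const_mul _)]
        simp only [sub_mul]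
    _ ≤ |∫ θ in am x..am t, ε * w θ| :=
        norm_integral_le_abs_of_norm_le (ae_restrict_of_forall_mem measurableSet_uIoc hbound)
          (hw_int.const_mul ε)
    _ = ε * ‖t - x‖ := by
        rw [intervalIntegral.integral_const_mul, ← ham.sub_eq_integral h0, abs_mul,
          abs_of_pos hε, Real.norm_eq_abs]

end InverseOfIntegral

theorem contDiff_two_of_hasDerivAt {f f' f'' : ℝ → ℝ} (hf : ∀ x, HasDerivAt f (f' x) x)
    (hf' : ∀ x, HasDerivAt f' (f'' x) x) (hf'' : Continuous f'') : ContDiff ℝ 2 f := by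
  have hderiv : deriv f = f' := funext fun x => (hf x).deriv
  have hderiv' : deriv f' = f'' := funext fun x => (hf' x).deriv
  rw [show (2 : WithTop ℕ∞) = 1 + 1 from rfl, contDiff_succ_iff_deriv, hderiv,
    contDiff_one_iff_deriv, hderiv']
  exact ⟨fun x => (hf x).differentiableAt, by simp, fun x => (hf' x).differentiableAt, hf''⟩

theorem countable_setOf_cos_eq_zero : {θ : ℝ | cos θ = 0}.Countable :=
  (countable_range fun k : ℤ => (2 * k + 1) * π / 2).mono fun _ hθ => by
    obtain ⟨k, hk⟩ := cos_eq_zero_iff.1 hθ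
    exact ⟨k, hk.symm⟩

theorem one_sub_sq_mul_sin_sq_pos {q θ : ℝ} (hq : q ^ 2 ≤ 1) (hθ : cos θ ≠ 0) :
    0 < 1 - q ^ 2 * sin θ ^ 2 := by
  have := sin_sq_add_cos_sq θ
  have : 0 < cos θ ^ 2 := by positivity
  nlinarith [sq_nonneg (sin θ)]

theorem hasDerivAt_abs_cos_rpow_mul_cos {p q θ : ℝ} (hq : q ^ 2 ≤ 1) (hθ : cos θ ≠ 0) :
    HasDerivAt (fun θ => |cos θ| ^ (1 - 2 / p) * cos θ)
      (-(2 - 2 / p) * sin θ * √(1 - q ^ 2 * sin θ ^ 2) *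
        (|cos θ| ^ (1 - 2 / p) / √(1 - q ^ 2 * sin θ ^ 2))) θ := by
  have hsqrt := (sqrt_pos.2 (one_sub_sq_mul_sin_sq_pos hq hθ)).ne'
  refine ((hasDerivAt_abs_rpow_mul_self hθ).comp θ (hasDerivAt_cos θ)).congr_deriv ?_
  rw [mul_div_assoc', mul_div_right_comm, mul_div_cancel_right₀ _ hsqrt]
  ring

theorem hasDerivAt_sin_mul_sqrt {p q θ : ℝ} (hq : q ^ 2 ≤ 1) (hθ : cos θ ≠ 0) :
    HasDerivAt (fun θ => -(2 - 2 / p) * sin θ * √(1 - q ^ 2 * sin θ ^ 2))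
      (-(2 - 2 / p) * (1 - 2 * q ^ 2 * sin θ ^ 2) * (|cos θ| ^ (2 / p - 1) * cos θ) *
        (|cos θ| ^ (1 - 2 / p) / √(1 - q ^ 2 * sin θ ^ 2))) θ := by
  have hD := one_sub_sq_mul_sin_sq_pos hq hθ
  have hsq : √(1 - q ^ 2 * sin θ ^ 2) ^ 2 = 1 - q ^ 2 * sin θ ^ 2 := sq_sqrt hD.le
  have habs : |cos θ| ^ (2 / p - 1) * |cos θ| ^ (1 - 2 / p) = 1 := by
    rw [← Real.rpow_add (abs_pos.2 hθ)]; norm_num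
  have hD' := (((hasDerivAt_sin θ).fun_pow 2).const_mul (q ^ 2)).const_sub 1
  simp only [Nat.cast_ofNat, Nat.add_one_sub_one, pow_one] at hD'
  refine (((hasDerivAt_sin θ).const_mul _).mul (hD'.sqrt hD.ne')).congr_deriv ?_
  rw [show ∀ a b c d e : ℝ, a * b * (c * cos θ) * (d / e) = a * b * cos θ * (c * d) / e by
    intros; ring, habs, mul_one]
  field_simp
  linear_combination (-(1 - 1 / p)) * hsq

/-- `x ↦ |cn_p(x,q)|^{p-2} cn_p(x,q)` is of class `C²` on `ℝ`, with first derivative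
`-(2-2/p) sin(am_{1,p} x) √(1 - q² sin²(am_{1,p} x))`. -/
theorem cnp_power_C2 (p q : ℝ) (hp : 1 < p) (hq : q ∈ Set.Icc (0:ℝ) 1)
    (am : ℝ → ℝ) (ham : IsInverseOn (F1 p q) am (amDom p q))
    (cn : ℝ → ℝ) (hcn : ∀ x, cn x = |Real.cos (am x)| ^ (2/p - 1) * Real.cos (am x)) :
    ContDiff ℝ 2 (fun x => |cn x| ^ (p-2) * cn x) ∧
    ∀ x : ℝ, deriv (fun x => |cn x| ^ (p-2) * cn x) x
      = -(2 - 2/p) * Real.sin (am x) * Real.sqrt (1 - q^2 * Real.sin (am x) ^ 2) := by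
  have hq2 : q ^ 2 ≤ 1 := by nlinarith [hq.1, hq.2]
  have h2p : 0 < 2 / p ∧ 2 / p < 2 := ⟨by positivity, by rw [div_lt_iff₀] <;> linarith⟩
  have : (amDom p q).OrdConnected := by unfold amDom; split_ifs <;> infer_instance
  have h0 : (0 : ℝ) ∈ amDom p q := by unfold amDom; split_ifs <;> simp [pi_pos]
  have hw : ∀ θ, 0 ≤ |cos θ| ^ (1 - 2 / p) / √(1 - q ^ 2 * sin θ ^ 2) := fun θ => by positivity
  have ham_cont : Continuous am := ham.continuous (ham.monotone h0 hw)
  have hρ : Continuous fun θ => -(2 - 2 / p) * (1 - 2 * q ^ 2 * sin θ ^ 2) *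
      (|cos θ| ^ (2 / p - 1) * cos θ) :=
    (by fun_prop : Continuous fun θ => -(2 - 2 / p) * (1 - 2 * q ^ 2 * sin θ ^ 2)).mul
      ((continuous_abs_rpow_mul_self (by linarith)).comp continuous_cos)
  have hΦ := ham.hasDerivAt_comp h0 hw countable_setOf_cos_eq_zero
    ((continuous_abs_rpow_mul_self (by linarith)).comp continuous_cos) (by fun_prop)
    fun θ hθ => hasDerivAt_abs_cos_rpow_mul_cos hq2 hθ
  have hψ := ham.hasDerivAt_comp h0 hw countable_setOf_cos_eq_zero (by fun_prop) hρ
    fun θ hθ => hasDerivAt_sin_mul_sqrt hq2 hθ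
  have hcn_pow : (fun x => |cn x| ^ (p - 2) * cn x)
      = fun x => |cos (am x)| ^ (1 - 2 / p) * cos (am x) := by
    funext x
    rw [hcn, abs_rpow_mul_self_rpow_mul_self]
    congr 2
    field_simp
    ring
  rw [hcn_pow]
  exact ⟨contDiff_two_of_hasDerivAt hΦ hψ (hρ.comp ham_cont), fun x => (hΦ x).deriv⟩
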